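/- Let P = S·n·e·T be a Schröder path containing a consecutive north step followed by an east step at a given position, and let SdT and SenT be the paths obtained by replacing those two steps by a single diagonal step, respectively by an east step followed by a north step (assuming SenT is still a valid Schröder path). Then LLT(SneT) = (q-1)·LLT(SdT) + LLT(SenT), where LLT of a Schröder path denotes the LLT polynomial of its associated LLT graph. -/

import Mathlib

/-
The three paths agree everywhere except at the corner box `(a+1, b+1)`, where `(a, b)` is the
endpoint of `S`: every other box has the same diagonal-step and under-path status for all three
paths, while at the corner `SneT` has a double edge, `SdT` a type I edge and `SenT` no edge.
Coloring by coloring the weights therefore satisfy the local relation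
`q[x > y] + [x ≤ y] = (q - 1)[x > y] + 1`, and summing over the finitely many colorings of a
given monomial gives the relation between the LLT series.
-/

open scoped Classical

noncomputable section

/-- A lattice-path step: north `(0,1)`, east `(1,0)`, or diagonal `(1,1)`. -/
inductive Step : Type
  | n : Step
  | e : Step
  | d : Step
deriving DecidableEq

/-- The endpoint of the lattice path given by a list of steps, starting at `(0,0)`. -/
def pathPos (P : List Step) : ℕ × ℕ :=
  (P.count Step.e + P.count Step.d, P.count Step.n + P.count Step.d)

/-- `P` is a Schröder path of length `m`: it runs from `(0,0)` to `(m,m)`, never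
falls below the main diagonal, and has no diagonal step starting on the diagonal. -/
def IsSchroder (m : ℕ) (P : List Step) : Prop :=
  pathPos P = (m, m) ∧
  (∀ k : ℕ, (pathPos (P.take k)).1 ≤ (pathPos (P.take k)).2) ∧
  (∀ k : ℕ, P[k]? = some Step.d → (pathPos (P.take k)).1 < (pathPos (P.take k)).2)

/-- `P` has a diagonal step in the box `(i,j)` (the unit box with top-right
vertex `(i,j)`), i.e. some prefix of `P` ends at `(i-1, j-1)` and is followed by a
diagonal step. -/
def HasDiag (P : List Step) (i j : ℕ) : Prop :=
  ∃ k : ℕ, P[k]? = some Step.d ∧ pathPos (P.take k) = (i - 1, j - 1)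

/-- The box `(i,j)` lies (strictly) under the path `P`: some prefix of `P` ends at a
point with abscissa `i-1` and ordinate at least `j`. -/
def UnderPath (P : List Step) (i j : ℕ) : Prop :=
  ∃ k : ℕ, (pathPos (P.take k)).1 = i - 1 ∧ j ≤ (pathPos (P.take k)).2

/-- The weight of a coloring `f` of the vertices `1, ..., m` (the diagonal boxes)
for the LLT graph `G(P)` of a Schröder path `P`: each diagonal-step box `(i,j)`
gives a type I edge (factor `[f i > f j]`), and each box `(i,j)` with `i < j`
strictly under `P` gives a double edge (factor `q[f i > f j] + [f i ≤ f j]`,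
with `q = Polynomial.X`). -/
noncomputable def schroderWeight (m : ℕ) (P : List Step) (f : ℕ → ℕ+) : Polynomial ℤ :=
  ∏ p ∈ Finset.Icc 1 m ×ˢ Finset.Icc 1 m,
    ((if HasDiag P p.1 p.2 then (if f p.2 < f p.1 then 1 else 0) else 1) *
      (if p.1 < p.2 ∧ UnderPath P p.1 p.2 then
        (if f p.2 < f p.1 then Polynomial.X else 1) else 1))

/-- The LLT polynomial `LLT(G(P))` of a Schröder path `P` of length `m`, as a formal
power series in the variables `x_1, x_2, ...` indexed by `ℕ+`: the coefficient of a
monomial `dd` is the sum of `schroderWeight` over the colorings `f` of `{1, ..., m}`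
(extended by `1` elsewhere) whose monomial `∏_{v=1}^m x_{f v}` equals `dd`. -/
noncomputable def LLTpath (m : ℕ) (P : List Step) : MvPowerSeries ℕ+ (Polynomial ℤ) :=
  fun dd => ∑ᶠ f : ℕ → ℕ+,
    if (∀ v : ℕ, v ∉ Finset.Icc 1 m → f v = 1) ∧
        (∑ v ∈ Finset.Icc 1 m, Finsupp.single (f v) 1) = dd
    then schroderWeight m P f else 0

def pathVertices (P : List Step) : Set (ℕ × ℕ) := Set.range fun k => pathPos (P.take k)

def diagStarts (P : List Step) : Set (ℕ × ℕ) :=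
  {v | ∃ k, P[k]? = some Step.d ∧ pathPos (P.take k) = v}

@[simp] lemma pathPos_nil : pathPos [] = 0 := rfl

@[simp] lemma pathPos_d : pathPos [Step.d] = (1, 1) := rfl

@[simp] lemma pathPos_northEast : pathPos [Step.n, Step.e] = (1, 1) := rfl

lemma pathPos_append (A B : List Step) : pathPos (A ++ B) = pathPos A + pathPos B := by
  simp only [pathPos, List.count_append, Prod.mk_add_mk]
  ring_nf

lemma pathPos_ne_zero {L : List Step} (hL : L ≠ []) : pathPos L ≠ 0 := by
  obtain ⟨s, L, rfl⟩ := List.exists_cons_of_ne_nil hL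
  cases s <;> simp [pathPos]

lemma pathPos_take_le (L : List Step) (k : ℕ) : pathPos (L.take k) ≤ pathPos L := by
  conv_rhs => rw [← L.take_append_drop k, pathPos_append]
  exact le_self_add

lemma pathPos_take_ne {L : List Step} {k : ℕ} (hk : k < L.length) :
    pathPos (L.take k) ≠ pathPos L := by
  conv_rhs => rw [← L.take_append_drop k, pathPos_append]
  refine fun h => pathPos_ne_zero (L := L.drop k) (by simpa using hk) ?_
  simpa using h

lemma pathVertices_append (A B : List Step) :
    pathVertices (A ++ B) = pathVertices A ∪ (pathPos A + ·) '' pathVertices B := by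
  ext v
  simp only [pathVertices, Set.mem_union, Set.mem_range, Set.mem_image, exists_exists_eq_and,
    List.take_append, pathPos_append]
  constructor
  · rintro ⟨k, rfl⟩
    rcases le_total k A.length with hk | hk
    · exact Or.inl ⟨k, by simp [Nat.sub_eq_zero_of_le hk]⟩
    · exact Or.inr ⟨k - A.length, by rw [List.take_of_length_le hk]⟩
  · rintro (⟨k, rfl⟩ | ⟨k, rfl⟩)
    · exact ⟨min k A.length, by simp [← List.take_eq_take_min]⟩
    · exact ⟨A.length + k, by simp [List.take_of_length_le]⟩

lemma diagStarts_append (A B : List Step) :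
    diagStarts (A ++ B) = diagStarts A ∪ (pathPos A + ·) '' diagStarts B := by
  ext v
  simp only [diagStarts, Set.mem_union, Set.mem_ofPred_eq, Set.mem_image, List.take_append,
    pathPos_append, List.getElem?_append]
  constructor
  · rintro ⟨k, hk, rfl⟩
    rcases lt_or_ge k A.length with h | h
    · exact Or.inl ⟨k, by simpa [h] using hk, by simp [Nat.sub_eq_zero_of_le h.le]⟩
    · exact Or.inr ⟨_, ⟨k - A.length, by simpa [h.not_gt] using hk, rfl⟩,
        by rw [List.take_of_length_le h]⟩
  · rintro (⟨k, hk, rfl⟩ | ⟨_, ⟨k, hk, rfl⟩, rfl⟩)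
    · have h := (List.getElem?_eq_some_iff.mp hk).1
      exact ⟨k, by simpa [h] using hk, by simp [Nat.sub_eq_zero_of_le h.le]⟩
    · exact ⟨A.length + k, by simpa using hk, by simp [List.take_of_length_le]⟩

lemma pathVertices_cons (s : Step) (L : List Step) :
    pathVertices (s :: L) = insert 0 ((pathPos [s] + ·) '' pathVertices L) := by
  ext v
  simp only [pathVertices, Set.mem_insert_iff, Set.mem_range, Set.mem_image, exists_exists_eq_and]
  have hcons (k : ℕ) : pathPos ((s :: L).take (k + 1)) = pathPos [s] + pathPos (L.take k) := by
    rw [List.take_succ_cons, ← List.singleton_append, pathPos_append]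
  constructor
  · rintro ⟨_ | k, rfl⟩
    exacts [Or.inl rfl, Or.inr ⟨k, (hcons k).symm⟩]
  · rintro (rfl | ⟨k, rfl⟩)
    exacts [⟨0, rfl⟩, ⟨k + 1, hcons k⟩]

@[simp] lemma pathVertices_nil : pathVertices [] = {0} := by
  simp [pathVertices]

lemma pathVertices_northEast :
    pathVertices [Step.n, Step.e] = insert (0, 1) (pathVertices [Step.d]) := by
  simp [pathVertices_cons, pathPos, Set.image_insert_eq, Set.insert_comm]

lemma pathVertices_eastNorth :
    pathVertices [Step.e, Step.n] = insert (1, 0) (pathVertices [Step.d]) := by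
  simp [pathVertices_cons, pathPos, Set.image_insert_eq, Set.insert_comm]

lemma diagStarts_eq_empty {L : List Step} (hL : Step.d ∉ L) : diagStarts L = ∅ := by
  ext v
  simp only [diagStarts, Set.mem_ofPred_eq, Set.mem_empty_iff_false, iff_false]
  rintro ⟨k, hk, -⟩
  exact hL (List.mem_of_getElem? hk)

lemma diagStarts_d : diagStarts [Step.d] = insert 0 (diagStarts [Step.n, Step.e]) := by
  rw [diagStarts_eq_empty (L := [Step.n, Step.e]) (by simp), insert_empty_eq]
  ext v
  simp only [diagStarts, Set.mem_ofPred_eq, Set.mem_singleton_iff]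
  constructor
  · rintro ⟨_ | k, hk, rfl⟩
    · rfl
    · simp at hk
  · rintro rfl
    exact ⟨0, rfl, rfl⟩

lemma pathVertices_append_append (S M T : List Step) :
    pathVertices (S ++ M ++ T) = pathVertices S ∪ (pathPos S + ·) '' pathVertices M ∪
      (pathPos S + pathPos M + ·) '' pathVertices T := by
  simp only [pathVertices_append, pathPos_append, add_assoc]

lemma diagStarts_append_append (S M T : List Step) :
    diagStarts (S ++ M ++ T) = diagStarts S ∪ (pathPos S + ·) '' diagStarts M ∪
      (pathPos S + pathPos M + ·) '' diagStarts T := by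
  simp only [diagStarts_append, pathPos_append, add_assoc]

lemma pathVertices_append_append_of_eq_insert {M M' : List Step} {v : ℕ × ℕ}
    (hM : pathVertices M = insert v (pathVertices M')) (hpos : pathPos M = pathPos M')
    (S T : List Step) :
    pathVertices (S ++ M ++ T) = insert (pathPos S + v) (pathVertices (S ++ M' ++ T)) := by
  rw [pathVertices_append_append, pathVertices_append_append, hM, hpos, Set.image_insert_eq,
    Set.union_insert, Set.insert_union]

lemma diagStarts_append_append_of_eq_insert {M M' : List Step} {v : ℕ × ℕ}
    (hM : diagStarts M = insert v (diagStarts M')) (hpos : pathPos M = pathPos M')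
    (S T : List Step) :
    diagStarts (S ++ M ++ T) = insert (pathPos S + v) (diagStarts (S ++ M' ++ T)) := by
  rw [diagStarts_append_append, diagStarts_append_append, hM, hpos, Set.image_insert_eq,
    Set.union_insert, Set.insert_union]

lemma le_pathPos_of_mem_pathVertices {P : List Step} {v : ℕ × ℕ} (hv : v ∈ pathVertices P) :
    v ≤ pathPos P := by
  obtain ⟨k, rfl⟩ := hv
  exact pathPos_take_le P k

lemma hasDiag_iff {P : List Step} {i j : ℕ} : HasDiag P i j ↔ (i - 1, j - 1) ∈ diagStarts P :=
  Iff.rfl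

lemma underPath_iff {P : List Step} {i j : ℕ} :
    UnderPath P i j ↔ ∃ v ∈ pathVertices P, v.1 = i - 1 ∧ j ≤ v.2 := by
  simp [UnderPath, pathVertices]

section LocalMove

variable (S T : List Step)

lemma pathVertices_northEast_eq_insert : pathVertices (S ++ [Step.n, Step.e] ++ T) =
    insert (pathPos S + (0, 1)) (pathVertices (S ++ [Step.d] ++ T)) :=
  pathVertices_append_append_of_eq_insert pathVertices_northEast rfl S T

lemma pathVertices_eastNorth_eq_insert : pathVertices (S ++ [Step.e, Step.n] ++ T) =
    insert (pathPos S + (1, 0)) (pathVertices (S ++ [Step.d] ++ T)) :=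
  pathVertices_append_append_of_eq_insert pathVertices_eastNorth rfl S T

lemma diagStarts_d_eq_insert : diagStarts (S ++ [Step.d] ++ T) =
    insert (pathPos S) (diagStarts (S ++ [Step.n, Step.e] ++ T)) := by
  simpa using diagStarts_append_append_of_eq_insert diagStarts_d rfl S T

lemma diagStarts_eastNorth : diagStarts (S ++ [Step.e, Step.n] ++ T) =
    diagStarts (S ++ [Step.n, Step.e] ++ T) := by
  rw [diagStarts_append_append, diagStarts_append_append,
    diagStarts_eq_empty (L := [Step.e, Step.n]) (by simp),
    diagStarts_eq_empty (L := [Step.n, Step.e]) (by simp)]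
  rfl

lemma pathPos_mem_pathVertices_d : pathPos S ∈ pathVertices (S ++ [Step.d] ++ T) :=
  ⟨S.length, by simp⟩

lemma pathPos_add_mem_pathVertices_d :
    pathPos S + (1, 1) ∈ pathVertices (S ++ [Step.d] ++ T) := by
  rw [pathVertices_append_append]
  exact Or.inr ⟨0, ⟨0, rfl⟩, add_zero _⟩

lemma underPath_eastNorth_iff {i j : ℕ} :
    UnderPath (S ++ [Step.e, Step.n] ++ T) i j ↔ UnderPath (S ++ [Step.d] ++ T) i j := by
  rw [underPath_iff, underPath_iff, pathVertices_eastNorth_eq_insert, Set.exists_mem_insert]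
  refine or_iff_right_of_imp fun ⟨hi, hj⟩ => ⟨_, pathPos_add_mem_pathVertices_d S T, ?_⟩
  simp only [Prod.fst_add, Prod.snd_add] at hi hj ⊢
  omega

/-- Phrased with `i - 1` because truncated subtraction makes `UnderPath P 0 j` agree with
`UnderPath P 1 j`. -/
lemma underPath_northEast_iff {i j : ℕ} :
    UnderPath (S ++ [Step.n, Step.e] ++ T) i j ↔
      (i - 1 = (pathPos S).1 ∧ j = (pathPos S).2 + 1) ∨ UnderPath (S ++ [Step.d] ++ T) i j := by
  rw [underPath_iff, underPath_iff, pathVertices_northEast_eq_insert, Set.exists_mem_insert]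
  simp only [Prod.fst_add, Prod.snd_add, add_zero]
  constructor
  · rintro (⟨hi, hj⟩ | h)
    · rcases hj.eq_or_lt with hj | hj
      · exact Or.inl ⟨hi.symm, hj⟩
      · exact Or.inr ⟨_, pathPos_mem_pathVertices_d S T, hi, by omega⟩
    · exact Or.inr h
  · rintro (⟨hi, hj⟩ | h)
    · exact Or.inl ⟨hi.symm, hj.le⟩
    · exact Or.inr h

lemma hasDiag_d_iff {i j : ℕ} :
    HasDiag (S ++ [Step.d] ++ T) i j ↔
      (i - 1, j - 1) = pathPos S ∨ HasDiag (S ++ [Step.n, Step.e] ++ T) i j := by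
  simp only [hasDiag_iff, diagStarts_d_eq_insert, Set.mem_insert_iff]

lemma hasDiag_eastNorth_iff {i j : ℕ} :
    HasDiag (S ++ [Step.e, Step.n] ++ T) i j ↔ HasDiag (S ++ [Step.n, Step.e] ++ T) i j := by
  rw [hasDiag_iff, hasDiag_iff, diagStarts_eastNorth]

lemma not_underPath_d_corner :
    ¬ UnderPath (S ++ [Step.d] ++ T) ((pathPos S).1 + 1) ((pathPos S).2 + 1) := by
  rw [underPath_iff, pathVertices_append_append]
  rintro ⟨v, (hS | ⟨w, hw, rfl⟩) | ⟨w, -, rfl⟩, hi, hj⟩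
  · have := (le_pathPos_of_mem_pathVertices hS).2
    omega
  · have : w = 0 ∨ w = (1, 1) := by simpa [pathVertices_cons, pathPos] using hw
    rcases this with rfl | rfl <;> simp at hi hj
  · simp only [pathPos_d, Prod.fst_add] at hi
    omega

lemma not_hasDiag_northEast_corner :
    ¬ HasDiag (S ++ [Step.n, Step.e] ++ T) ((pathPos S).1 + 1) ((pathPos S).2 + 1) := by
  rw [hasDiag_iff, diagStarts_append_append,
    diagStarts_eq_empty (L := [Step.n, Step.e]) (by simp)]
  rintro ((⟨k, hk, hv⟩ | ⟨w, ⟨⟩, -⟩) | ⟨w, -, hw⟩)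
  · exact pathPos_take_ne (List.getElem?_eq_some_iff.mp hk).1 (by simpa using hv)
  · have := congrArg Prod.fst hw
    simp only [pathPos_northEast, Prod.fst_add] at this
    omega

end LocalMove

theorem Finset.prod_eq_mul_prod_add_prod {ι R : Type*} [CommSemiring R] {s : Finset ι}
    {f g h : ι → R} {i : ι} (hi : i ∈ s) (c : R) (hfg : ∀ j ∈ s, j ≠ i → f j = g j)
    (hfh : ∀ j ∈ s, j ≠ i → f j = h j) (hf : f i = c * g i + h i) :
    ∏ j ∈ s, f j = c * ∏ j ∈ s, g j + ∏ j ∈ s, h j := by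
  have hg : ∏ j ∈ s.erase i, f j = ∏ j ∈ s.erase i, g j :=
    prod_congr rfl fun j hj => hfg j (mem_of_mem_erase hj) (ne_of_mem_erase hj)
  have hh : ∏ j ∈ s.erase i, f j = ∏ j ∈ s.erase i, h j :=
    prod_congr rfl fun j hj => hfh j (mem_of_mem_erase hj) (ne_of_mem_erase hj)
  rw [← mul_prod_erase s f hi, ← mul_prod_erase s g hi, ← mul_prod_erase s h hi, hf, ← hg, ← hh]
  ring

lemma schroderWeight_northEast (m : ℕ) (S T : List Step) (hlt : (pathPos S).1 < (pathPos S).2)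
    (hm : (pathPos S).2 < m) (f : ℕ → ℕ+) :
    schroderWeight m (S ++ [Step.n, Step.e] ++ T) f =
      (Polynomial.X - 1) * schroderWeight m (S ++ [Step.d] ++ T) f +
        schroderWeight m (S ++ [Step.e, Step.n] ++ T) f := by
  unfold schroderWeight
  apply Finset.prod_eq_mul_prod_add_prod (i := ((pathPos S).1 + 1, (pathPos S).2 + 1))
    (by simp only [Finset.mem_product, Finset.mem_Icc]; omega)
  · rintro ⟨i, j⟩ hij hne
    simp only [Finset.mem_product, Finset.mem_Icc, ne_eq, Prod.mk.injEq] at hij hne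
    have hD : HasDiag (S ++ [Step.d] ++ T) i j ↔ HasDiag (S ++ [Step.n, Step.e] ++ T) i j := by
      rw [hasDiag_d_iff, Prod.ext_iff]
      exact or_iff_right (by simp only; omega)
    have hU : UnderPath (S ++ [Step.n, Step.e] ++ T) i j ↔ UnderPath (S ++ [Step.d] ++ T) i j := by
      rw [underPath_northEast_iff]
      exact or_iff_right (by omega)
    simp only [hD, hU]
  · rintro ⟨i, j⟩ hij hne
    simp only [Finset.mem_product, Finset.mem_Icc, ne_eq, Prod.mk.injEq] at hij hne
    have hU : UnderPath (S ++ [Step.n, Step.e] ++ T) i j ↔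
        UnderPath (S ++ [Step.e, Step.n] ++ T) i j := by
      rw [underPath_northEast_iff, underPath_eastNorth_iff]
      exact or_iff_right (by omega)
    simp only [hasDiag_eastNorth_iff, hU]
  · have hU : (pathPos S).1 + 1 < (pathPos S).2 + 1 ∧
        UnderPath (S ++ [Step.n, Step.e] ++ T) ((pathPos S).1 + 1) ((pathPos S).2 + 1) :=
      ⟨by omega, (underPath_northEast_iff S T).2 (Or.inl ⟨rfl, rfl⟩)⟩
    have hD : HasDiag (S ++ [Step.d] ++ T) ((pathPos S).1 + 1) ((pathPos S).2 + 1) :=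
      (hasDiag_d_iff S T).2 (Or.inl rfl)
    simp only [hU, hD, not_hasDiag_northEast_corner, hasDiag_eastNorth_iff,
      underPath_eastNorth_iff, not_underPath_d_corner, and_self, and_false, if_true, if_false]
    split_ifs <;> ring

lemma finite_setOf_mapsTo_of_eq_off {α β : Type*} (s : Finset α) {t : Set β} (ht : t.Finite)
    (b : β) : {f : α → β | (∀ a ∈ s, f a ∈ t) ∧ ∀ a ∉ s, f a = b}.Finite := by
  refine Set.Finite.of_finite_image (f := fun f (a : s) => f a)
    ((Set.Finite.pi fun _ => ht).subset ?_) ?_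
  · rintro _ ⟨f, hf, rfl⟩ a -
    exact hf.1 a a.2
  · intro f hf g hg hfg
    funext a
    by_cases ha : a ∈ s
    · exact congrFun hfg ⟨a, ha⟩
    · rw [hf.2 a ha, hg.2 a ha]

lemma finite_colorings (m : ℕ) (dd : ℕ+ →₀ ℕ) :
    {f : ℕ → ℕ+ | (∀ v : ℕ, v ∉ Finset.Icc 1 m → f v = 1) ∧
      (∑ v ∈ Finset.Icc 1 m, Finsupp.single (f v) 1) = dd}.Finite := by
  refine (finite_setOf_mapsTo_of_eq_off (Finset.Icc 1 m) dd.support.finite_toSet 1).subset ?_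
  rintro f ⟨hout, rfl⟩
  refine ⟨fun v hv => ?_, hout⟩
  have : Finsupp.single (f v) 1 ≤ ∑ v ∈ Finset.Icc 1 m, Finsupp.single (f v) 1 :=
    Finset.single_le_sum (f := fun v => Finsupp.single (f v) 1) (fun _ _ => zero_le) hv
  rw [Finsupp.single_le_iff] at this
  simpa [Finsupp.mem_support_iff] using Nat.one_le_iff_ne_zero.mp this

lemma finsum_ite_eq_mul_add {α R : Type*} [Semiring R] {C : α → Prop} [DecidablePred C]
    (hC : {x | C x}.Finite) {c : R} {u v w : α → R} (h : ∀ x, C x → u x = c * v x + w x) :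
    ∑ᶠ x, (if C x then u x else 0) =
      c * ∑ᶠ x, (if C x then v x else 0) + ∑ᶠ x, (if C x then w x else 0) := by
  have hsupp (g : α → R) : Function.support (fun x => if C x then g x else 0) ⊆ hC.toFinset :=
    fun x hx => hC.mem_toFinset.mpr (by_contra fun hCx => hx (if_neg hCx))
  simp only [finsum_eq_sum_of_support_subset _ (hsupp _), Finset.mul_sum,
    ← Finset.sum_add_distrib]
  refine Finset.sum_congr rfl fun x hx => ?_
  have hx : C x := by simpa using hx
  simp only [if_pos hx, h x hx]

theorem schroder_relation_A_general (m : ℕ) (S T : List Step)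
    (h2 : IsSchroder m (S ++ [Step.d] ++ T)) :
    LLTpath m (S ++ [Step.n, Step.e] ++ T) =
      MvPowerSeries.C (σ := ℕ+) (R := Polynomial ℤ) (Polynomial.X - 1) *
          LLTpath m (S ++ [Step.d] ++ T) +
        LLTpath m (S ++ [Step.e, Step.n] ++ T) := by
  have hlt : (pathPos S).1 < (pathPos S).2 := by
    simpa [List.take_append] using h2.2.2 S.length (by simp)
  have hm : (pathPos S).2 < m := by
    have := congrArg Prod.snd h2.1
    simp only [pathPos_append, pathPos_d, Prod.snd_add] at this
    omega
  refine MvPowerSeries.ext fun dd => ?_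
  rw [map_add, MvPowerSeries.coeff_C_mul]
  exact finsum_ite_eq_mul_add (finite_colorings m dd) fun f _ =>
    schroderWeight_northEast m S T hlt hm f

/-- Relation (A) of Alexandersson–Sulzgruber: if `SneT`, `SdT` and `SenT` are
Schröder paths of length `m`, then
`LLT(SneT) = (q-1)·LLT(SdT) + LLT(SenT)`. -/
theorem schroder_relation_A (m : ℕ) (S T : List Step)
    (h1 : IsSchroder m (S ++ [Step.n, Step.e] ++ T))
    (h2 : IsSchroder m (S ++ [Step.d] ++ T))
    (h3 : IsSchroder m (S ++ [Step.e, Step.n] ++ T)) :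
    LLTpath m (S ++ [Step.n, Step.e] ++ T) =
      MvPowerSeries.C (σ := ℕ+) (R := Polynomial ℤ) (Polynomial.X - 1) *
          LLTpath m (S ++ [Step.d] ++ T) +
        LLTpath m (S ++ [Step.e, Step.n] ++ T) :=
  schroder_relation_A_general m S T h2
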